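/- Let d ≥ 2, b > a ≥ 1, 0 < l ≤ b with a + l > b, and define the real sequence χ_0 = 1, χ_{n+1} = ((a·χ_n + l)/b)^d. Then: if the sequence (χ_n) is bounded, h(T_{M(a,b;l)}) = log b; and if χ_n → ∞ as n → ∞, then h(T_{M(a,b;l)}) > log b. In particular h(T_{M(a,b;l)}) = log b if and only if (χ_n) is bounded. -/

import Mathlib

open Filter Real

/-- `treeP d M n i` = number of `n`-blocks of the hom Markov tree-shift `T_M`
on the `d`-tree whose root label is `i`. -/
def treeP (d : ℕ) {ι : Type} [Fintype ι] (M : Matrix ι ι ℕ) : ℕ → ι → ℕ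
  | 0, _ => 1
  | n + 1, i => (∑ j, M i j * treeP d M n j) ^ d

/-- `|Δ_n| = 1 + d + ⋯ + d^n`. -/
def deltaCard (d n : ℕ) : ℕ := ∑ i ∈ Finset.range (n + 1), d ^ i

/-- Topological entropy of the hom Markov tree-shift `T_M` on the `d`-tree. -/
noncomputable def treeEntropy (d : ℕ) {ι : Type} [Fintype ι] (M : Matrix ι ι ℕ) : ℝ :=
  Filter.limsup (fun n => Real.log (∑ i, treeP d M n i) / (deltaCard d n : ℝ)) Filter.atTop

/-- `M` has entries in `{0,1}`. -/
def IsBinary {ι : Type} [Fintype ι] (M : Matrix ι ι ℕ) : Prop := ∀ i j, M i j ≤ 1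

/-- `M` is irreducible. -/
def MatIrreducible {ι : Type} [Fintype ι] [DecidableEq ι] (M : Matrix ι ι ℕ) : Prop :=
  ∀ i j, ∃ n, 1 ≤ n ∧ 0 < (M ^ n) i j

/-- `M` is the block matrix `[[E_a, R],[O, E_b]]` with `R` binary of constant row sum `l`. -/
def IsMabl (a b l : ℕ) (M : Matrix (Fin (a + b)) (Fin (a + b)) ℕ) : Prop :=
  (∀ i j, M i j ≤ 1) ∧
  (∀ i j : Fin (a + b), (i : ℕ) < a → (j : ℕ) < a → M i j = 1) ∧
  (∀ i j : Fin (a + b), a ≤ (i : ℕ) → a ≤ (j : ℕ) → M i j = 1) ∧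
  (∀ i j : Fin (a + b), a ≤ (i : ℕ) → (j : ℕ) < a → M i j = 0) ∧
  (∀ i : Fin (a + b), (i : ℕ) < a → (∑ j : Fin (a + b), if a ≤ (j : ℕ) then M i j else 0) = l)

/-!
Grouping the states into the `a` upper and the `b` lower ones is an equitable partition with
quotient matrix `!![a, l; 0, b]`, so the number of `n`-blocks is `(1 + a χₙ / b) b ^ |Δₙ|` and
`log p(n) / |Δₙ| = log b + log (1 + a χₙ / b) / |Δₙ|`. If `χ` is bounded the correction tends
to `0`. Otherwise `xₙ = log (a χₙ / b)` satisfies `xₙ₊₁ ≥ d xₙ + log (a / b)`; once `xₙ` passes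
the fixed point of `t ↦ d t + log (a / b)` it grows like `dⁿ`, which is comparable to `|Δₙ|`,
so the correction stays bounded away from `0`.
-/

open Topology

lemma deltaCard_succ (d n : ℕ) : deltaCard d (n + 1) = d * deltaCard d n + 1 := by
  rw [deltaCard, deltaCard, geom_sum_succ]

lemma one_le_deltaCard (d n : ℕ) : 1 ≤ deltaCard d n :=
  Finset.single_le_sum (f := (d ^ ·)) (fun _ _ => Nat.zero_le _) (Finset.mem_range.2 n.succ_pos)

lemma pow_le_deltaCard (d n : ℕ) : d ^ n ≤ deltaCard d n :=
  Finset.single_le_sum (f := (d ^ ·)) (fun _ _ => Nat.zero_le _) (Finset.self_mem_range_succ n)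

lemma deltaCard_lt_pow_succ {d : ℕ} (hd : 2 ≤ d) (n : ℕ) : deltaCard d n < d ^ (n + 1) :=
  Nat.geomSum_lt hd fun _ => Finset.mem_range.1

lemma tendsto_deltaCard_atTop {d : ℕ} (hd : 2 ≤ d) :
    Tendsto (fun n => (deltaCard d n : ℝ)) atTop atTop :=
  tendsto_atTop_mono (fun n => (by exact_mod_cast pow_le_deltaCard d n : (d : ℝ) ^ n ≤ _))
    (tendsto_pow_atTop_atTop_of_one_lt (by exact_mod_cast hd))

section TreeP

variable {d : ℕ} {ι κ : Type} [Fintype ι] [Fintype κ]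

theorem treeP_eq_treeP_quotient [DecidableEq κ] {M : Matrix ι ι ℕ} {B : Matrix κ κ ℕ} (f : ι → κ)
    (hf : ∀ i c, ∑ j with f j = c, M i j = B (f i) c) (n : ℕ) (i : ι) :
    treeP d M n i = treeP d B n (f i) := by
  induction n generalizing i with
  | zero => rfl
  | succ n ih =>
    simp only [treeP, ih]
    congr 1
    rw [← Finset.sum_fiberwise _ f]
    refine Finset.sum_congr rfl fun c _ => ?_
    rw [← hf i c, Finset.sum_mul]
    exact Finset.sum_congr rfl fun j hj => by rw [(Finset.mem_filter.1 hj).2]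

theorem sum_treeP_le_card_pow {M : Matrix ι ι ℕ} (hM : IsBinary M) (n : ℕ) :
    ∑ i, treeP d M n i ≤ Fintype.card ι ^ deltaCard d n := by
  induction n with
  | zero => simp [treeP, deltaCard]
  | succ n ih =>
    have hrow : ∀ i, ∑ j, M i j * treeP d M n j ≤ ∑ j, treeP d M n j := fun i =>
      Finset.sum_le_sum fun j _ => mul_le_of_le_one_left' (hM i j)
    calc ∑ i, treeP d M (n + 1) i ≤ ∑ _i : ι, (∑ j, treeP d M n j) ^ d :=
          Finset.sum_le_sum fun i _ => Nat.pow_le_pow_left (hrow i) d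
      _ ≤ Fintype.card ι * (Fintype.card ι ^ deltaCard d n) ^ d := by
          rw [Finset.sum_const, Finset.card_univ, smul_eq_mul]
          gcongr
      _ = Fintype.card ι ^ deltaCard d (n + 1) := by
          rw [deltaCard_succ, ← pow_mul, pow_succ, mul_comm d, mul_comm]

theorem isBoundedUnder_log_sum_treeP_div {M : Matrix ι ι ℕ} (hM : IsBinary M) :
    IsBoundedUnder (· ≤ ·) atTop
      (fun n => Real.log (∑ i, treeP d M n i) / (deltaCard d n : ℝ)) := by
  refine isBoundedUnder_of ⟨Real.log (Fintype.card ι), fun n => ?_⟩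
  have hΔ : (0 : ℝ) < deltaCard d n := by exact_mod_cast one_le_deltaCard d n
  rw [div_le_iff₀ hΔ, mul_comm, ← Real.log_pow]
  rcases Nat.eq_zero_or_pos (∑ i, treeP d M n i) with h0 | hpos
  · rw [← Nat.cast_sum, h0, Nat.cast_zero, Real.log_zero]
    exact_mod_cast Real.log_natCast_nonneg _
  · rw [← Nat.cast_sum]
    exact Real.log_le_log (by exact_mod_cast hpos) (by exact_mod_cast sum_treeP_le_card_pow hM n)

end TreeP

theorem exists_pos_mul_pow_le {x : ℕ → ℝ} {r c : ℝ} (hr : 1 < r)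
    (hx : ∀ n, r * x n + c ≤ x (n + 1)) (hunb : ∀ C, ∃ n, C < x n) :
    ∃ ε > 0, ∀ᶠ n in atTop, ε * r ^ n ≤ x n := by
  -- `-s` is the fixed point of `t ↦ r t + c`, so `x + s` grows at least geometrically
  obtain ⟨s, hs⟩ : ∃ s, r * s = s + c :=
    ⟨c / (r - 1), by field_simp [(sub_pos.2 hr).ne']; ring⟩
  obtain ⟨N, hN⟩ := hunb (-s)
  have hgrow : ∀ m, r ^ m * (x N + s) ≤ x (N + m) + s := by
    intro m
    induction m with
    | zero => simp
    | succ m ih =>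
      calc r ^ (m + 1) * (x N + s) = r * (r ^ m * (x N + s)) := by ring
        _ ≤ r * (x (N + m) + s) := by gcongr
        _ ≤ x (N + m + 1) + s := by linarith [hx (N + m)]
  set δ := (x N + s) / r ^ N
  have hδ : 0 < δ := div_pos (by linarith) (by positivity)
  have hδN : δ * r ^ N = x N + s := div_mul_cancel₀ _ (by positivity)
  have hlarge : ∀ᶠ n in atTop, s ≤ δ / 2 * r ^ n :=
    ((tendsto_pow_atTop_atTop_of_one_lt hr).const_mul_atTop (by positivity)).eventually_ge_atTop s
  refine ⟨δ / 2, by positivity, ?_⟩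
  filter_upwards [hlarge, eventually_ge_atTop N] with n hn hNn
  obtain ⟨m, rfl⟩ := Nat.exists_eq_add_of_le hNn
  have hsplit : δ * r ^ (N + m) = r ^ m * (x N + s) := by rw [pow_add, ← hδN]; ring
  linarith [hgrow m]

section Mabl

variable {d a b l : ℕ}

def blockIndex (a : ℕ) {b : ℕ} (i : Fin (a + b)) : Fin 2 := if (i : ℕ) < a then 0 else 1

lemma blockIndex_castAdd (j : Fin a) : blockIndex a (Fin.castAdd b j) = 0 := if_pos j.isLt

lemma blockIndex_natAdd (j : Fin b) : blockIndex a (Fin.natAdd a j) = 1 := by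
  simp [blockIndex]

lemma sum_blockIndex_eq_one {M : Type*} [AddCommMonoid M] (f : Fin (a + b) → M) :
    ∑ j with blockIndex a j = 1, f j = ∑ j : Fin (a + b), if a ≤ (j : ℕ) then f j else 0 := by
  rw [Finset.sum_filter]
  refine Finset.sum_congr rfl fun j _ => if_congr ?_ rfl rfl
  unfold blockIndex
  split_ifs <;> simp_all

theorem IsMabl.sum_blockIndex_eq {M : Matrix (Fin (a + b)) (Fin (a + b)) ℕ} (hM : IsMabl a b l M)
    (i : Fin (a + b)) (c : Fin 2) :
    ∑ j with blockIndex a j = c, M i j = !![a, l; 0, b] (blockIndex a i) c := by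
  obtain ⟨-, hUL, hLR, hLL, hUR⟩ := hM
  by_cases hi : (i : ℕ) < a
  · have hi' : blockIndex a i = 0 := if_pos hi
    fin_cases c
    · simp [Finset.sum_filter, Fin.sum_univ_add, blockIndex_castAdd, blockIndex_natAdd, hi',
        hUL i _ hi]
    · simpa [sum_blockIndex_eq_one, hi'] using hUR i hi
  · have hi' : blockIndex a i = 1 := if_neg hi
    push Not at hi
    fin_cases c
    · simp [Finset.sum_filter, Fin.sum_univ_add, blockIndex_castAdd, blockIndex_natAdd, hi',
        hLL i _ hi]
    · simp [Finset.sum_filter, Fin.sum_univ_add, blockIndex_castAdd, blockIndex_natAdd, hi',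
        hLR i _ hi]

theorem IsMabl.sum_treeP {M : Matrix (Fin (a + b)) (Fin (a + b)) ℕ} (hM : IsMabl a b l M)
    (n : ℕ) :
    ∑ i, treeP d M n i = a * treeP d !![a, l; 0, b] n 0 + b * treeP d !![a, l; 0, b] n 1 := by
  simp [Fin.sum_univ_add, treeP_eq_treeP_quotient _ hM.sum_blockIndex_eq, blockIndex_castAdd,
    blockIndex_natAdd]

lemma treeP_quotient_succ_zero (n : ℕ) :
    treeP d !![a, l; 0, b] (n + 1) 0 =
      (a * treeP d !![a, l; 0, b] n 0 + l * treeP d !![a, l; 0, b] n 1) ^ d := by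
  simp [treeP, Fin.sum_univ_two]

lemma treeP_quotient_succ_one (n : ℕ) :
    treeP d !![a, l; 0, b] (n + 1) 1 = (b * treeP d !![a, l; 0, b] n 1) ^ d := by
  simp [treeP, Fin.sum_univ_two]

lemma mul_treeP_one (n : ℕ) : b * treeP d !![a, l; 0, b] n 1 = b ^ deltaCard d n := by
  induction n with
  | zero => simp [treeP, deltaCard]
  | succ n ih =>
    rw [treeP_quotient_succ_one, ih, deltaCard_succ, pow_succ, ← pow_mul, mul_comm, mul_comm d]

section Orbit

variable {χ : ℕ → ℝ} (hχ0 : χ 0 = 1) (hχ : ∀ n, χ (n + 1) = (((a : ℝ) * χ n + l) / b) ^ d)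
include hχ0 hχ

lemma orbit_pos (ha : 0 < a) (hb : 0 < b) (n : ℕ) : 0 < χ n := by
  induction n with
  | zero => rw [hχ0]; exact one_pos
  | succ n ih => rw [hχ]; positivity

lemma treeP_zero_eq_orbit_mul (hb : 0 < b) (n : ℕ) :
    (treeP d !![a, l; 0, b] n 0 : ℝ) = χ n * treeP d !![a, l; 0, b] n 1 := by
  induction n with
  | zero => simp [treeP, hχ0]
  | succ n ih =>
    have hb' : (b : ℝ) ≠ 0 := by exact_mod_cast hb.ne'
    rw [treeP_quotient_succ_zero, treeP_quotient_succ_one]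
    push_cast
    rw [ih, hχ, ← mul_pow]
    congr 1
    field_simp

theorem IsMabl.log_sum_treeP_div {M : Matrix (Fin (a + b)) (Fin (a + b)) ℕ} (hM : IsMabl a b l M)
    (ha : 0 < a) (hb : 0 < b) (n : ℕ) :
    Real.log (∑ i, treeP d M n i) / (deltaCard d n : ℝ) =
      Real.log b + Real.log (1 + a * χ n / b) / (deltaCard d n : ℝ) := by
  have hb' : (0 : ℝ) < b := by exact_mod_cast hb
  have hΔ : (0 : ℝ) < deltaCard d n := by exact_mod_cast one_le_deltaCard d n
  have hsum : (∑ i, treeP d M n i : ℝ) = (1 + a * χ n / b) * b ^ deltaCard d n := by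
    have h1 : (b : ℝ) * treeP d !![a, l; 0, b] n 1 = b ^ deltaCard d n := by
      exact_mod_cast mul_treeP_one n
    rw [← Nat.cast_sum, hM.sum_treeP, ← h1]
    push_cast
    rw [treeP_zero_eq_orbit_mul hχ0 hχ hb]
    field_simp
    ring
  have hpos : 0 < 1 + a * χ n / b := by
    have := orbit_pos hχ0 hχ ha hb n
    positivity
  rw [hsum, Real.log_mul hpos.ne' (by positivity), Real.log_pow]
  field_simp
  ring

lemma log_orbit_growth (ha : 0 < a) (hb : 0 < b) (n : ℕ) :
    d * Real.log (a * χ n / b) + Real.log (a / b) ≤ Real.log (a * χ (n + 1) / b) := by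
  have hχn := orbit_pos hχ0 hχ ha hb n
  have hab : (0 : ℝ) < a / b := by positivity
  have hstep : Real.log (a * χ n / b) ≤ Real.log ((a * χ n + l) / b) :=
    Real.log_le_log (by positivity) (by gcongr; simp)
  rw [hχ, show (a : ℝ) * ((a * χ n + l) / b) ^ d / b = a / b * ((a * χ n + l) / b) ^ d by ring,
    Real.log_mul hab.ne' (by positivity), Real.log_pow]
  linarith [mul_le_mul_of_nonneg_left hstep (Nat.cast_nonneg d : (0 : ℝ) ≤ d)]

theorem IsMabl.treeEntropy_eq_log {M : Matrix (Fin (a + b)) (Fin (a + b)) ℕ}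
    (hM : IsMabl a b l M) (hd : 2 ≤ d) (ha : 0 < a) (hb : 0 < b) (hbdd : ∃ C, ∀ n, χ n ≤ C) :
    treeEntropy d M = Real.log b := by
  obtain ⟨C, hC⟩ := hbdd
  have hlog : ∀ n, 0 ≤ Real.log (1 + a * χ n / b) ∧
      Real.log (1 + a * χ n / b) ≤ Real.log (1 + a * C / b) := by
    intro n
    have hχn := orbit_pos hχ0 hχ ha hb n
    refine ⟨Real.log_nonneg (by simp; positivity), ?_⟩
    gcongr
    exact hC n
  have hdecay : Tendsto (fun n => Real.log (1 + a * χ n / b) / (deltaCard d n : ℝ)) atTop (𝓝 0) :=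
    squeeze_zero (fun n => div_nonneg (hlog n).1 (Nat.cast_nonneg _))
      (fun n => div_le_div_of_nonneg_right (hlog n).2 (Nat.cast_nonneg _))
      (tendsto_const_nhds.div_atTop (tendsto_deltaCard_atTop hd))
  refine Tendsto.limsup_eq ?_
  simp only [hM.log_sum_treeP_div hχ0 hχ ha hb]
  simpa using tendsto_const_nhds.add hdecay

theorem IsMabl.log_lt_treeEntropy {M : Matrix (Fin (a + b)) (Fin (a + b)) ℕ}
    (hM : IsMabl a b l M) (hd : 2 ≤ d) (ha : 0 < a) (hb : 0 < b) (hunb : ∀ C, ∃ n, C < χ n) :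
    Real.log b < treeEntropy d M := by
  have hunb' : ∀ C, ∃ n, C < Real.log (a * χ n / b) := by
    intro C
    obtain ⟨n, hn⟩ := hunb (b / a * Real.exp C)
    have hb' : (0 : ℝ) < b := by exact_mod_cast hb
    refine ⟨n, (Real.lt_log_iff_exp_lt (by have := orbit_pos hχ0 hχ ha hb n; positivity)).2 ?_⟩
    rw [lt_div_iff₀ hb']
    calc Real.exp C * b = a * (b / a * Real.exp C) := by field_simp
      _ < a * χ n := by gcongr
  obtain ⟨ε, hε, hev⟩ := exists_pos_mul_pow_le (r := d) (by exact_mod_cast hd)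
    (log_orbit_growth hχ0 hχ ha hb) hunb'
  have hfreq : ∀ᶠ n in atTop,
      Real.log b + ε / d ≤ Real.log (∑ i, treeP d M n i) / (deltaCard d n : ℝ) := by
    filter_upwards [hev] with n hn
    have hχn := orbit_pos hχ0 hχ ha hb n
    have hΔ : (deltaCard d n : ℝ) < d ^ (n + 1) := by exact_mod_cast deltaCard_lt_pow_succ hd n
    have hΔpos : (0 : ℝ) < deltaCard d n := by exact_mod_cast one_le_deltaCard d n
    rw [hM.log_sum_treeP_div hχ0 hχ ha hb]
    gcongr Real.log b + ?_
    calc ε / d = ε * d ^ n / d ^ (n + 1) := by field_simp; ring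
      _ ≤ ε * d ^ n / deltaCard d n := by gcongr
      _ ≤ Real.log (a * χ n / b) / deltaCard d n := by gcongr
      _ ≤ Real.log (1 + a * χ n / b) / deltaCard d n := by gcongr; linarith
  have hle := le_limsup_of_frequently_le hfreq.frequently (isBoundedUnder_log_sum_treeP_div hM.1)
  have : 0 < ε / d := by positivity
  exact lt_of_lt_of_le (by linarith) hle

end Orbit

end Mabl

theorem treeEntropy_Mabl_iff_bounded_general {d a b l : ℕ} (hd : 2 ≤ d)
    (ha : 1 ≤ a) (hab : a < b)
    (M : Matrix (Fin (a + b)) (Fin (a + b)) ℕ) (hM : IsMabl a b l M)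
    (χ : ℕ → ℝ) (hχ0 : χ 0 = 1)
    (hχ : ∀ n, χ (n + 1) = (((a : ℝ) * χ n + l) / b) ^ d) :
    ((∃ C : ℝ, ∀ n, χ n ≤ C) → treeEntropy d M = Real.log b) ∧
    (Filter.Tendsto χ Filter.atTop Filter.atTop → treeEntropy d M > Real.log b) ∧
    (treeEntropy d M = Real.log b ↔ ∃ C : ℝ, ∀ n, χ n ≤ C) := by
  have hb : 0 < b := (Nat.zero_le a).trans_lt hab
  have hbdd := hM.treeEntropy_eq_log hχ0 hχ hd ha hb
  have hunb := hM.log_lt_treeEntropy hχ0 hχ hd ha hb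
  refine ⟨hbdd, fun htop => hunb fun C => (htop.eventually_gt_atTop C).exists, fun heq => ?_, hbdd⟩
  by_contra hnb
  push Not at hnb
  exact (hunb hnb).ne' heq

/-- For `b > a ≥ 1`, `0 < l ≤ b` with `a + l > b` and the auxiliary orbit
`χ₀ = 1`, `χ_{n+1} = ((a·χ_n + l)/b)^d`: `h(T_{M(a,b;l)}) = log b` when `(χ_n)` is
bounded, `h(T_{M(a,b;l)}) > log b` when `χ_n → ∞`; in particular
`h(T_{M(a,b;l)}) = log b ↔ (χ_n)` is bounded. -/
theorem treeEntropy_Mabl_iff_bounded {d a b l : ℕ} (hd : 2 ≤ d)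
    (ha : 1 ≤ a) (hab : a < b) (hl : 0 < l) (hlb : l ≤ b) (hsum : b < a + l)
    (M : Matrix (Fin (a + b)) (Fin (a + b)) ℕ) (hM : IsMabl a b l M)
    (χ : ℕ → ℝ) (hχ0 : χ 0 = 1)
    (hχ : ∀ n, χ (n + 1) = (((a : ℝ) * χ n + l) / b) ^ d) :
    ((∃ C : ℝ, ∀ n, χ n ≤ C) → treeEntropy d M = Real.log b) ∧
    (Filter.Tendsto χ Filter.atTop Filter.atTop → treeEntropy d M > Real.log b) ∧
    (treeEntropy d M = Real.log b ↔ ∃ C : ℝ, ∀ n, χ n ≤ C) :=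
  treeEntropy_Mabl_iff_bounded_general hd ha hab M hM χ hχ0 hχ
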